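/- For every μ ∈ ℂ, every element z of the center of U(𝔤), and every c ∈ ℂ: if z·m = c·m for all m in the Verma module M(μ), then z·f = c·f for all f in the dual module N(−μ)*. That is, N(−μ)* admits the central character of M(μ). -/

import Mathlib

open UniversalEnvelopingAlgebra

attribute [local instance 100] LieRing.ofAssociativeRing

/-- The left ideal of `U(𝔤)` generated by `{ι x : x ∈ 𝔫⁺} ∪ {ι d - μ·1}` (defining the
Verma module `M(μ)`). -/
noncomputable def vermaIdeal (L : Type*) [LieRing L] [LieAlgebra ℂ L]
    (Np : LieSubalgebra ℂ L) (d : L) (μ : ℂ) :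
    Submodule (UniversalEnvelopingAlgebra ℂ L) (UniversalEnvelopingAlgebra ℂ L) :=
  Submodule.span (UniversalEnvelopingAlgebra ℂ L)
    ({a | ∃ x : Np, a = ι ℂ (x : L)} ∪
      {ι ℂ d - algebraMap ℂ (UniversalEnvelopingAlgebra ℂ L) μ})

/-- The left ideal of `U(𝔤)` generated by `{ι x : x ∈ 𝔫⁻} ∪ {ι d + μ·1}` (defining the
lowest-weight Verma module `N(−μ)`). -/
noncomputable def lowestVermaIdeal (L : Type*) [LieRing L] [LieAlgebra ℂ L]
    (Nn : LieSubalgebra ℂ L) (d : L) (μ : ℂ) :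
    Submodule (UniversalEnvelopingAlgebra ℂ L) (UniversalEnvelopingAlgebra ℂ L) :=
  Submodule.span (UniversalEnvelopingAlgebra ℂ L)
    ({a | ∃ x : Nn, a = ι ℂ (x : L)} ∪
      {ι ℂ d + algebraMap ℂ (UniversalEnvelopingAlgebra ℂ L) μ})

/-- The representation of a Lie algebra on the dual of a module, `(x·f)(w) = −f(x·w)`. -/
noncomputable def dualLieRep {L : Type*} [LieRing L] [LieAlgebra ℂ L]
    {V : Type*} [AddCommGroup V] [Module ℂ V]
    (ρ : L →ₗ⁅ℂ⁆ Module.End ℂ V) : L →ₗ⁅ℂ⁆ Module.End ℂ (Module.Dual ℂ V) where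
  toFun x := -((ρ x).dualMap)
  map_add' x y := by ext f w; simp; abel
  map_smul' c x := by ext f w; simp
  map_lie' {x y} := by ext f w; simp [Ring.lie_def]

/-!
Let `T` be the principal anti-automorphism of `U(𝔤)`, `T (ι x) = -ι x`. The dual action of `u`
on `N(−μ)*` is the transpose of the action of `T u` on `N(−μ) = U(𝔤) ⧸ J`, and `T z` is central,
so it suffices to show `T z - c ∈ J`. Since `z - c` lies in the Verma ideal, `T z - c` lies in
the right ideal generated by `𝔫⁺` and `d + μ`, and it has `ad d`-weight zero. The weight-zero part
of that right ideal is spanned by products `x * u` with `x ∈ 𝔤ₚ`, `p > 0`, and `u` a monomial of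
weight `-p`, and by `(d + μ) * u` with `u` of weight zero. Both kinds lie in `J`: `u` commutes
with `d` in the second case, and in the first `u ∈ J` because every monomial of negative weight
lies in `J`, which is proved by moving its factors of positive degree to the left, by induction
on the length.
-/

namespace UniversalEnvelopingAlgebra

variable {R L : Type*} [CommRing R] [LieRing L] [LieAlgebra R L]

theorem adjoin_range_ι :
    Algebra.adjoin R (Set.range (ι R : L → UniversalEnvelopingAlgebra R L)) = ⊤ := by
  have hrange : (mkAlgHom R L).range = ⊤ := RingCon.range_mkₐ
  rw [← hrange, ← Algebra.map_top, ← TensorAlgebra.adjoin_range_ι, AlgHom.map_adjoin,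
    ← Set.range_comp]
  rfl

theorem mem_center_of_forall_commute_ι {u : UniversalEnvelopingAlgebra R L}
    (hu : ∀ x : L, Commute (ι R x) u) :
    u ∈ Subalgebra.center R (UniversalEnvelopingAlgebra R L) := by
  have htop : Algebra.adjoin R (Set.range (ι R : L → UniversalEnvelopingAlgebra R L)) ≤
      Subalgebra.centralizer R {u} :=
    Algebra.adjoin_le <| by rintro _ ⟨x, rfl⟩ _ rfl; exact (hu x).eq.symm
  rw [adjoin_range_ι] at htop
  exact Subalgebra.mem_center_iff.mpr fun v => ((htop (Algebra.mem_top (x := v))) u rfl).symm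

variable (R) in
def antipodeLieHom : L →ₗ⁅R⁆ (UniversalEnvelopingAlgebra R L)ᵐᵒᵖ where
  toFun x := -MulOpposite.op (ι R x)
  map_add' x y := by simp only [map_add, MulOpposite.op_add, neg_add]
  map_smul' c x := by simp
  map_lie' {x y} := by
    simp only [LieHom.map_lie, LieRing.of_associative_ring_bracket, neg_mul_neg,
      MulOpposite.op_sub, MulOpposite.op_mul]
    abel

variable (R) in
def antipode : UniversalEnvelopingAlgebra R L →ₐ[R] (UniversalEnvelopingAlgebra R L)ᵐᵒᵖ :=
  lift R (antipodeLieHom R)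

@[simp]
theorem antipode_ι (x : L) : antipode R (ι R x) = -MulOpposite.op (ι R x) :=
  lift_ι_apply R (antipodeLieHom R) x

@[simp]
theorem unop_antipode_ι (x : L) : (antipode R (ι R x)).unop = -ι R x := by
  rw [antipode_ι, MulOpposite.unop_neg, MulOpposite.unop_op]

theorem unop_antipode_mem_center {z : UniversalEnvelopingAlgebra R L}
    (hz : z ∈ Subalgebra.center R (UniversalEnvelopingAlgebra R L)) :
    (antipode R z).unop ∈ Subalgebra.center R (UniversalEnvelopingAlgebra R L) := by
  refine mem_center_of_forall_commute_ι fun x => ?_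
  have h := congrArg (fun u => (antipode R u).unop) (Subalgebra.mem_center_iff.mp hz (ι R x))
  simp only [map_mul, MulOpposite.unop_mul, unop_antipode_ι, mul_neg, neg_mul, neg_inj] at h
  exact h.symm

end UniversalEnvelopingAlgebra

variable (R V : Type*) [CommRing R] [AddCommGroup V] [Module R V] in
def Module.End.dualMapAlgHom : (Module.End R V)ᵐᵒᵖ →ₐ[R] Module.End R (Module.Dual R V) where
  toFun φ := φ.unop.dualMap
  map_one' := rfl
  map_mul' _ _ := rfl
  map_zero' := by ext; simp
  map_add' _ _ := by ext; simp
  commutes' _ := by ext; simp [Module.algebraMap_end_apply]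

@[simp]
theorem Module.End.dualMapAlgHom_apply {R V : Type*} [CommRing R] [AddCommGroup V] [Module R V]
    (φ : (Module.End R V)ᵐᵒᵖ) : Module.End.dualMapAlgHom R V φ = φ.unop.dualMap :=
  rfl

theorem lift_dualLieRep_comp_ι_apply {L V : Type*} [LieRing L] [LieAlgebra ℂ L] [AddCommGroup V]
    [Module ℂ V] (F : UniversalEnvelopingAlgebra ℂ L →ₐ[ℂ] Module.End ℂ V)
    (u : UniversalEnvelopingAlgebra ℂ L) :
    lift ℂ (dualLieRep (F.toLieHom.comp (ι ℂ))) u = (F (antipode ℂ u).unop).dualMap := by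
  have h : lift ℂ (dualLieRep (F.toLieHom.comp (ι ℂ))) =
      (Module.End.dualMapAlgHom ℂ V).comp (F.op.comp (antipode ℂ)) := by
    ext x f v
    simp [dualLieRep, lift_ι_apply, -ι_apply]
  rw [h]
  simp

theorem LieAlgebra.mul_mem_eigenspace_ad {R A : Type*} [CommRing R] [Ring A] [Algebra R A]
    {a u v : A} {s t : R} (hu : u ∈ (LieAlgebra.ad R A a).eigenspace s)
    (hv : v ∈ (LieAlgebra.ad R A a).eigenspace t) :
    u * v ∈ (LieAlgebra.ad R A a).eigenspace (s + t) := by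
  rw [Module.End.mem_eigenspace_iff, LieAlgebra.ad_apply, Ring.lie_def] at hu hv ⊢
  calc a * (u * v) - u * v * a = (a * u - u * a) * v + u * (a * v - v * a) := by noncomm_ring
    _ = (s + t) • (u * v) := by rw [hu, hv, smul_mul_assoc, mul_smul_comm, add_smul]

theorem Module.End.mem_of_mem_sup_iSup_eigenspace {K M : Type*} [Field K] [AddCommGroup M]
    [Module K M] {f : Module.End K M} {μ : K} {W : Submodule K M} (hW : W ≤ f.eigenspace μ)
    {u : M} (hu : u ∈ W ⊔ ⨆ (ν) (_ : ν ≠ μ), f.eigenspace ν) (hμ : u ∈ f.eigenspace μ) :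
    u ∈ W := by
  have hdisj : (⨆ (ν) (_ : ν ≠ μ), f.eigenspace ν) ⊓ f.eigenspace μ = ⊥ :=
    (f.eigenspaces_iSupIndep μ).symm.eq_bot
  have : u ∈ (W ⊔ ⨆ (ν) (_ : ν ≠ μ), f.eigenspace ν) ⊓ f.eigenspace μ := ⟨hu, hμ⟩
  rwa [sup_inf_assoc_of_le _ hW, hdisj, sup_bot_eq] at this

theorem forall_smul_eq_smul_iff_sub_algebraMap_mem {R A : Type*} [CommRing R] [Ring A]
    [Algebra R A] (I : Submodule A A) {z : A} (hz : z ∈ Subalgebra.center R A) (c : R) :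
    (∀ m : A ⧸ I, z • m = c • m) ↔ z - algebraMap R A c ∈ I := by
  have hmk (u : A) : z • Submodule.Quotient.mk (p := I) u - c • Submodule.Quotient.mk u =
      Submodule.Quotient.mk (u * (z - algebraMap R A c)) := by
    rw [mul_sub, Subalgebra.mem_center_iff.mp hz u, ← Algebra.commutes, ← Algebra.smul_def,
      ← smul_eq_mul, Submodule.Quotient.mk_sub, Submodule.Quotient.mk_smul,
      Submodule.Quotient.mk_smul]
  refine ⟨fun h => ?_, fun h m => ?_⟩
  · have h1 := hmk 1
    rw [h, sub_self, one_mul] at h1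
    exact (Submodule.Quotient.mk_eq_zero I).mp h1.symm
  · obtain ⟨u, rfl⟩ := Submodule.Quotient.mk_surjective I m
    rw [← sub_eq_zero, hmk, Submodule.Quotient.mk_eq_zero]
    simpa [smul_eq_mul] using I.smul_mem u h

section Graded

variable {L : Type*} [LieRing L] [LieAlgebra ℂ L] (g : ℤ → Submodule ℂ L)

local notation "𝓤" => UniversalEnvelopingAlgebra ℂ L

inductive IsGradedMonomial : 𝓤 → ℤ → ℕ → Prop
  | one : IsGradedMonomial 1 0 0
  | mul_ι {u : 𝓤} {n : ℤ} {k : ℕ} {x : L} {m : ℤ} :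
      IsGradedMonomial u n k → x ∈ g m → IsGradedMonomial (u * ι ℂ x) (n + m) (k + 1)

variable {g}

theorem isGradedMonomial_ι {m : ℤ} {x : L} (hx : x ∈ g m) : IsGradedMonomial g (ι ℂ x) m 1 := by
  simpa using IsGradedMonomial.one.mul_ι hx

namespace IsGradedMonomial

theorem mul {u v : 𝓤} {n m : ℤ} {k l : ℕ} (hu : IsGradedMonomial g u n k)
    (hv : IsGradedMonomial g v m l) : IsGradedMonomial g (u * v) (n + m) (k + l) := by
  induction hv with
  | one => simpa using hu
  | @mul_ι v m l x p _ hx ih =>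
    rw [← mul_assoc, ← add_assoc, ← add_assoc]
    exact ih.mul_ι hx

theorem mem_eigenspace_ad {d : L} (hdx : ∀ n : ℤ, ∀ x ∈ g n, ⁅d, x⁆ = (n : ℂ) • x)
    {u : 𝓤} {n : ℤ} {k : ℕ} (hu : IsGradedMonomial g u n k) :
    u ∈ (LieAlgebra.ad ℂ 𝓤 (ι ℂ d)).eigenspace (n : ℂ) := by
  induction hu with
  | one => simp [Ring.lie_def]
  | @mul_ι u n k x m _ hx ih =>
    have hιx : ι ℂ x ∈ (LieAlgebra.ad ℂ 𝓤 (ι ℂ d)).eigenspace (m : ℂ) := by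
      rw [Module.End.mem_eigenspace_iff, LieAlgebra.ad_apply, ← LieHom.map_lie, hdx m x hx,
        map_smul]
    simpa using LieAlgebra.mul_mem_eigenspace_ad ih hιx

theorem commutator_mem_span (hBrk : ∀ m n : ℤ, ∀ x ∈ g m, ∀ y ∈ g n, ⁅x, y⁆ ∈ g (m + n))
    {u : 𝓤} {n : ℤ} {k : ℕ} (hu : IsGradedMonomial g u n k) {y : L} {q : ℤ} (hy : y ∈ g q) :
    u * ι ℂ y - ι ℂ y * u ∈ Submodule.span ℂ {w | IsGradedMonomial g w (n + q) k} := by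
  induction hu with
  | one => simp
  | @mul_ι u n k x m hu hx ih =>
    have hsplit : u * ι ℂ x * ι ℂ y - ι ℂ y * (u * ι ℂ x) =
        u * ι ℂ ⁅x, y⁆ + (u * ι ℂ y - ι ℂ y * u) * ι ℂ x := by
      rw [LieHom.map_lie, LieRing.of_associative_ring_bracket]
      noncomm_ring
    rw [hsplit]
    refine Submodule.add_mem _ (Submodule.subset_span ?_) ?_
    · simpa [add_assoc] using hu.mul_ι (hBrk m q x hx y hy)
    · have hmap := Submodule.apply_mem_span_image_of_mem_span (LinearMap.mulRight ℂ (ι ℂ x)) ih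
      refine Submodule.span_mono ?_ hmap
      rintro _ ⟨w, hw, rfl⟩
      simpa [add_right_comm] using (hw : IsGradedMonomial g w (n + q) k).mul_ι hx

end IsGradedMonomial

variable (g) in
theorem span_isGradedMonomial_eq_top (hg : ⨆ n, g n = ⊤) :
    Submodule.span ℂ {u : 𝓤 | ∃ n k, IsGradedMonomial g u n k} = ⊤ := by
  set P := Submodule.span ℂ {u : 𝓤 | ∃ n k, IsGradedMonomial g u n k}
  have hmul : P * P ≤ P := by
    rw [Submodule.span_mul_span]
    refine Submodule.span_mono ?_
    rintro _ ⟨u, ⟨n, k, hu⟩, v, ⟨m, l, hv⟩, rfl⟩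
    exact ⟨_, _, hu.mul hv⟩
  let A : Subalgebra ℂ 𝓤 := P.toSubalgebra (Submodule.subset_span ⟨0, 0, .one⟩)
    fun _ _ hu hv => hmul (Submodule.mul_mem_mul hu hv)
  have hιA : ∀ x : L, ι ℂ x ∈ A := by
    have : (⨆ n, g n) ≤ P.comap (ι ℂ : L →ₗ⁅ℂ⁆ 𝓤).toLinearMap :=
      iSup_le fun n x hx => Submodule.subset_span ⟨n, 1, isGradedMonomial_ι hx⟩
    exact fun x => this (hg ▸ Submodule.mem_top)
  have hA : A = ⊤ := by
    rw [← top_le_iff, ← adjoin_range_ι (R := ℂ) (L := L)]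
    exact Algebra.adjoin_le (by rintro _ ⟨x, rfl⟩; exact hιA x)
  exact top_le_iff.mp fun u _ => (hA ▸ Algebra.mem_top : u ∈ A)

end Graded

section Verma

variable {L : Type*} [LieRing L] [LieAlgebra ℂ L] {g : ℤ → Submodule ℂ L}
  {Nn : LieSubalgebra ℂ L} {d : L} {μ : ℂ}

local notation "𝓤" => UniversalEnvelopingAlgebra ℂ L

theorem ι_mem_lowestVermaIdeal {x : L} (hx : x ∈ Nn) : ι ℂ x ∈ lowestVermaIdeal L Nn d μ :=
  Submodule.subset_span (Or.inl ⟨⟨x, hx⟩, rfl⟩)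

theorem ι_add_algebraMap_mem_lowestVermaIdeal :
    ι ℂ d + algebraMap ℂ 𝓤 μ ∈ lowestVermaIdeal L Nn d μ :=
  Submodule.subset_span (Or.inr rfl)

theorem IsGradedMonomial.mem_lowestVermaIdeal
    (hBrk : ∀ m n : ℤ, ∀ x ∈ g m, ∀ y ∈ g n, ⁅x, y⁆ ∈ g (m + n))
    (hd0 : g 0 ≤ ℂ ∙ d) (hNn : ∀ n < 0, g n ≤ Nn.toSubmodule)
    {u : 𝓤} {n : ℤ} {k : ℕ} (hu : IsGradedMonomial g u n k) (hn : n < 0) :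
    u ∈ lowestVermaIdeal L Nn d μ := by
  set J := lowestVermaIdeal L Nn d μ
  induction k using Nat.strong_induction_on generalizing u n with
  | _ k ih =>
    rcases hu with _ | @⟨u, n, k, x, m, hu, hx⟩
    · exact absurd hn (lt_irrefl 0)
    rcases lt_trichotomy m 0 with hm | rfl | hm
    · exact Ideal.mul_mem_left J u (ι_mem_lowestVermaIdeal (hNn m hm hx))
    · have huJ : u ∈ J := ih k k.lt_succ_self hu (by simpa using hn)
      obtain ⟨t, rfl⟩ := Submodule.mem_span_singleton.mp (hd0 hx)
      have hsplit : u * ι ℂ (t • d) =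
          t • (u * (ι ℂ d + algebraMap ℂ 𝓤 μ)) - (t * μ) • u := by
        rw [map_smul, mul_add, ← Algebra.commutes, ← Algebra.smul_def, mul_smul_comm, smul_add,
          smul_smul, add_sub_cancel_right]
      rw [hsplit]
      exact J.sub_mem (Submodule.smul_of_tower_mem _ t
        (Ideal.mul_mem_left J u ι_add_algebraMap_mem_lowestVermaIdeal))
        (Submodule.smul_of_tower_mem _ _ huJ)
    · have huJ : u ∈ J := ih k k.lt_succ_self hu (by omega)
      have hcomm : u * ι ℂ x - ι ℂ x * u ∈ J := by
        refine Submodule.span_le (p := J.restrictScalars ℂ) |>.mpr ?_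
          (hu.commutator_mem_span hBrk hx)
        exact fun w hw => ih k k.lt_succ_self hw hn
      simpa using J.add_mem hcomm (Ideal.mul_mem_left J (ι ℂ x) huJ)

end Verma

section RightIdeal

variable {L : Type*} [LieRing L] [LieAlgebra ℂ L] {g : ℤ → Submodule ℂ L}
  {Np Nn : LieSubalgebra ℂ L} {d : L} {μ : ℂ}

local notation "𝓤" => UniversalEnvelopingAlgebra ℂ L

local notation "𝓔" => Module.End.eigenspace (LieAlgebra.ad ℂ 𝓤 (ι ℂ d))

-- The weight-zero elements of `𝓗` lie in the lowest-weight Verma ideal, by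
-- `Module.End.mem_of_mem_sup_iSup_eigenspace`.
local notation "𝓗" => (𝓔 0 ⊓ Submodule.restrictScalars ℂ (lowestVermaIdeal L Nn d μ)) ⊔
  ⨆ (ν : ℂ) (_ : ν ≠ 0), 𝓔 ν

theorem mul_mem_sup_iSup_eigenspace_ad (hg : ⨆ n, g n = ⊤)
    (hdx : ∀ n : ℤ, ∀ x ∈ g n, ⁅d, x⁆ = (n : ℂ) • x) {a : 𝓤} {p : ℤ}
    (ha : a ∈ 𝓔 (p : ℂ))
    (hJ : ∀ u l, IsGradedMonomial g u (-p) l → a * u ∈ lowestVermaIdeal L Nn d μ) (v : 𝓤) :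
    a * v ∈ 𝓗 := by
  have hv : v ∈ Submodule.span ℂ {u : 𝓤 | ∃ n k, IsGradedMonomial g u n k} :=
    span_isGradedMonomial_eq_top g hg ▸ Submodule.mem_top
  induction hv using Submodule.span_induction with
  | mem u hu =>
    obtain ⟨n, l, hu⟩ := hu
    have hau := LieAlgebra.mul_mem_eigenspace_ad ha (hu.mem_eigenspace_ad hdx)
    by_cases hpn : p + n = 0
    · obtain rfl : n = -p := by omega
      exact Submodule.mem_sup_left ⟨by simpa using hau, hJ u l hu⟩
    · exact Submodule.mem_sup_right <|
        Submodule.mem_iSup_of_mem _ <| Submodule.mem_iSup_of_mem (by exact_mod_cast hpn) hau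
  | zero => simp
  | add u w _ _ hu hw => rw [mul_add]; exact Submodule.add_mem _ hu hw
  | smul t u _ hu => rw [mul_smul_comm]; exact Submodule.smul_mem _ t hu

theorem ι_mul_mem_sup_iSup_eigenspace_ad (hg : ⨆ n, g n = ⊤)
    (hBrk : ∀ m n : ℤ, ∀ x ∈ g m, ∀ y ∈ g n, ⁅x, y⁆ ∈ g (m + n))
    (hdx : ∀ n : ℤ, ∀ x ∈ g n, ⁅d, x⁆ = (n : ℂ) • x) (hd0 : g 0 ≤ ℂ ∙ d)
    (hNn : ∀ n < 0, g n ≤ Nn.toSubmodule) (hNp : Np.toSubmodule ≤ ⨆ n > (0 : ℤ), g n)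
    {x : L} (hx : x ∈ Np) (v : 𝓤) :
    ι ℂ x * v ∈ 𝓗 := by
  suffices hle : (⨆ n > (0 : ℤ), g n) ≤
      ⨅ v : 𝓤, Submodule.comap (LinearMap.mulRight ℂ v ∘ₗ (ι ℂ : L →ₗ⁅ℂ⁆ 𝓤).toLinearMap) 𝓗 from
    Submodule.mem_iInf _ |>.mp (hle (hNp hx)) v
  refine iSup₂_le fun p hp y hy => Submodule.mem_iInf _ |>.mpr fun v => ?_
  refine mul_mem_sup_iSup_eigenspace_ad hg hdx
    ((isGradedMonomial_ι hy).mem_eigenspace_ad hdx) (fun u l hu => ?_) v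
  exact Ideal.mul_mem_left _ _ (hu.mem_lowestVermaIdeal hBrk hd0 hNn (by omega))

theorem ι_add_algebraMap_mul_mem_sup_iSup_eigenspace_ad (hg : ⨆ n, g n = ⊤)
    (hdx : ∀ n : ℤ, ∀ x ∈ g n, ⁅d, x⁆ = (n : ℂ) • x) (v : 𝓤) :
    (ι ℂ d + algebraMap ℂ 𝓤 μ) * v ∈ 𝓗 := by
  have hd : ι ℂ d + algebraMap ℂ 𝓤 μ ∈ 𝓔 ((0 : ℤ) : ℂ) := by
    rw [Module.End.mem_eigenspace_iff, LieAlgebra.ad_apply, Int.cast_zero, zero_smul, lie_add,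
      lie_self, zero_add, Ring.lie_def, Algebra.commutes, sub_self]
  refine mul_mem_sup_iSup_eigenspace_ad hg hdx hd (fun u l hu => ?_) v
  have hcomm : ι ℂ d * u = u * ι ℂ d := by
    have := hu.mem_eigenspace_ad hdx
    simpa [Module.End.mem_eigenspace_iff, Ring.lie_def, sub_eq_zero] using this
  rw [add_mul, hcomm, Algebra.commutes, ← mul_add]
  exact Ideal.mul_mem_left _ u ι_add_algebraMap_mem_lowestVermaIdeal

theorem unop_antipode_mem_sup_iSup_eigenspace_ad (hg : ⨆ n, g n = ⊤)
    (hBrk : ∀ m n : ℤ, ∀ x ∈ g m, ∀ y ∈ g n, ⁅x, y⁆ ∈ g (m + n))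
    (hdx : ∀ n : ℤ, ∀ x ∈ g n, ⁅d, x⁆ = (n : ℂ) • x) (hd0 : g 0 ≤ ℂ ∙ d)
    (hNn : ∀ n < 0, g n ≤ Nn.toSubmodule) (hNp : Np.toSubmodule ≤ ⨆ n > (0 : ℤ), g n)
    {a : 𝓤} (ha : a ∈ vermaIdeal L Np d μ) :
    (antipode ℂ a).unop ∈ 𝓗 := by
  -- the antipode turns the left ideal `vermaIdeal` into a right ideal
  suffices h : ∀ v, (antipode ℂ a).unop * v ∈ 𝓗 by
    simpa using h 1
  induction ha using Submodule.span_induction with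
  | mem b hb =>
    rcases hb with ⟨x, rfl⟩ | rfl
    · intro v
      rw [unop_antipode_ι, neg_mul]
      exact Submodule.neg_mem _ (ι_mul_mem_sup_iSup_eigenspace_ad hg hBrk hdx hd0 hNn hNp x.2 v)
    · intro v
      have hT : (antipode ℂ (ι ℂ d - algebraMap ℂ 𝓤 μ)).unop = -(ι ℂ d + algebraMap ℂ 𝓤 μ) := by
        rw [map_sub, AlgHom.commutes, MulOpposite.unop_sub, unop_antipode_ι,
          MulOpposite.algebraMap_apply, MulOpposite.unop_op, neg_add']
      rw [hT, neg_mul]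
      exact Submodule.neg_mem _ (ι_add_algebraMap_mul_mem_sup_iSup_eigenspace_ad hg hdx v)
  | zero => simp
  | add b b' _ _ hb hb' =>
    intro v
    rw [map_add, MulOpposite.unop_add, add_mul]
    exact add_mem (hb v) (hb' v)
  | smul u b _ hb =>
    intro v
    rw [smul_eq_mul, map_mul, MulOpposite.unop_mul, mul_assoc]
    exact hb _

end RightIdeal

theorem stmt_11_general (L : Type*) [LieRing L] [LieAlgebra ℂ L]
    (g : ℤ → Submodule ℂ L) (hInt : DirectSum.IsInternal g)
    (hBrk : ∀ m n : ℤ, ∀ x ∈ g m, ∀ y ∈ g n, ⁅x, y⁆ ∈ g (m + n))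
    (d : L) (hd0 : g 0 = Submodule.span ℂ {d})
    (hdx : ∀ n : ℤ, ∀ x ∈ g n, ⁅d, x⁆ = (n : ℂ) • x)
    (Np : LieSubalgebra ℂ L) (hNp : Np.toSubmodule = ⨆ n > (0 : ℤ), g n)
    (Nn : LieSubalgebra ℂ L) (hNn : Nn.toSubmodule = ⨆ n < (0 : ℤ), g n)
    (μ : ℂ)
    (z : UniversalEnvelopingAlgebra ℂ L)
    (hz : z ∈ Subalgebra.center ℂ (UniversalEnvelopingAlgebra ℂ L)) (c : ℂ)
    (hM : ∀ m : UniversalEnvelopingAlgebra ℂ L ⧸ vermaIdeal L Np d μ,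
      z • m = c • m) :
    ∀ f : Module.Dual ℂ (UniversalEnvelopingAlgebra ℂ L ⧸ lowestVermaIdeal L Nn d μ),
      UniversalEnvelopingAlgebra.lift ℂ
        (dualLieRep (((Algebra.lsmul ℂ ℂ
            (UniversalEnvelopingAlgebra ℂ L ⧸ lowestVermaIdeal L Nn d μ) :
          UniversalEnvelopingAlgebra ℂ L →ₐ[ℂ] Module.End ℂ
            (UniversalEnvelopingAlgebra ℂ L ⧸ lowestVermaIdeal L Nn d μ)).toLieHom).comp
          (ι ℂ))) z f = c • f := by
  intro f
  have hzT := unop_antipode_mem_center hz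
  have hsup := unop_antipode_mem_sup_iSup_eigenspace_ad hInt.submodule_iSup_eq_top hBrk hdx
    hd0.le (fun n hn => hNn ▸ le_iSup₂ (f := fun n (_ : n < 0) => g n) n hn) hNp.le
    ((forall_smul_eq_smul_iff_sub_algebraMap_mem _ hz c).mp hM)
  rw [map_sub, AlgHom.commutes, MulOpposite.unop_sub, MulOpposite.algebraMap_apply,
    MulOpposite.unop_op] at hsup
  have hE0 : (antipode ℂ z).unop - algebraMap ℂ _ c ∈
      (LieAlgebra.ad ℂ _ (ι ℂ d)).eigenspace 0 := by
    rw [Module.End.mem_eigenspace_iff, zero_smul, LieAlgebra.ad_apply, lie_sub, Ring.lie_def,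
      Ring.lie_def, Subalgebra.mem_center_iff.mp hzT, Algebra.commutes, sub_self, sub_self,
      sub_self]
  have hact := (forall_smul_eq_smul_iff_sub_algebraMap_mem _ hzT c).mpr
    (Module.End.mem_of_mem_sup_iSup_eigenspace inf_le_left hsup hE0).2
  rw [lift_dualLieRep_comp_ι_apply]
  refine LinearMap.ext fun w => ?_
  exact (congrArg f (hact w)).trans (map_smul f c w)

/-- In the graded setting: if a central element `z` of `U(𝔤)` acts on the Verma module
`M(μ)` by the scalar `c`, then `z` acts by `c` on the dual `N(−μ)*` of the lowest-weight
Verma module, where the `U(𝔤)`-action on `N(−μ)*` is the one induced (via the universal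
property of `U(𝔤)`) by the Lie algebra action `(x·f)(w) = −f(x·w)`. -/
theorem stmt_11 (L : Type*) [LieRing L] [LieAlgebra ℂ L]
    (g : ℤ → Submodule ℂ L) (hInt : DirectSum.IsInternal g)
    (hBrk : ∀ m n : ℤ, ∀ x ∈ g m, ∀ y ∈ g n, ⁅x, y⁆ ∈ g (m + n))
    (d : L) (hd : d ≠ 0) (hd0 : g 0 = Submodule.span ℂ {d})
    (hdx : ∀ n : ℤ, ∀ x ∈ g n, ⁅d, x⁆ = (n : ℂ) • x)
    (Np : LieSubalgebra ℂ L) (hNp : Np.toSubmodule = ⨆ n > (0 : ℤ), g n)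
    (Nn : LieSubalgebra ℂ L) (hNn : Nn.toSubmodule = ⨆ n < (0 : ℤ), g n)
    (μ : ℂ)
    (z : UniversalEnvelopingAlgebra ℂ L)
    (hz : z ∈ Subalgebra.center ℂ (UniversalEnvelopingAlgebra ℂ L)) (c : ℂ)
    (hM : ∀ m : UniversalEnvelopingAlgebra ℂ L ⧸ vermaIdeal L Np d μ,
      z • m = c • m) :
    ∀ f : Module.Dual ℂ (UniversalEnvelopingAlgebra ℂ L ⧸ lowestVermaIdeal L Nn d μ),
      UniversalEnvelopingAlgebra.lift ℂ
        (dualLieRep (((Algebra.lsmul ℂ ℂ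
            (UniversalEnvelopingAlgebra ℂ L ⧸ lowestVermaIdeal L Nn d μ) :
          UniversalEnvelopingAlgebra ℂ L →ₐ[ℂ] Module.End ℂ
            (UniversalEnvelopingAlgebra ℂ L ⧸ lowestVermaIdeal L Nn d μ)).toLieHom).comp
          (ι ℂ))) z f = c • f :=
  stmt_11_general L g hInt hBrk d hd0 hdx Np hNp Nn hNn μ z hz c hM
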